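/- arXiv:2503.12238 — 6 statements merged into one kernel-verified Lean document; each statement's English description precedes it below -/
import Mathlib

section
/- Let S be a nonempty finite type, let Q, P : Matrix S S ℝ be substochastic with Q ≤ P entrywise, and let α be a real number with 0 < α < 1. Then (1 - α • Q)⁻¹ ≤ (1 - α • P)⁻¹ entrywise. -/
/-! Expand both inverses as Neumann series: `(1 - α • P)⁻¹ = ∑ₖ (α • P) ^ k`, which converges
because a substochastic matrix has `ℓ∞` operator norm at most `1`. Entrywise, `0 ≤ Q ≤ P`
propagates to `Q ^ k ≤ P ^ k`, so the series for `Q` is termwise dominated by the one for `P`. -/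

open Matrix BigOperators

/-- A matrix is substochastic if every entry is nonnegative and every row sum is at most 1. -/
def Substochastic {S : Type*} [Fintype S] (P : Matrix S S ℝ) : Prop :=
  (∀ s s', 0 ≤ P s s') ∧ ∀ s, ∑ s', P s s' ≤ 1

attribute [local instance] Matrix.linftyOpNormedAddCommGroup Matrix.linftyOpNormedSpace
  Matrix.linftyOpNormedRing

namespace Matrix

variable {n α : Type*} [Fintype n] [DecidableEq n]

theorem pow_apply_le_pow_apply [Semiring α] [PartialOrder α] [IsOrderedRing α]
    {A B : Matrix n n α} (hA : ∀ i j, 0 ≤ A i j) (hAB : ∀ i j, A i j ≤ B i j) (k : ℕ) (i j : n) :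
    (A ^ k) i j ≤ (B ^ k) i j := by
  have hB : ∀ i j, 0 ≤ B i j := fun i j => (hA i j).trans (hAB i j)
  induction k generalizing i j with
  | zero => rfl
  | succ k ih =>
    rw [pow_succ, pow_succ, mul_apply, mul_apply]
    exact Finset.sum_le_sum fun l _ =>
      mul_le_mul (ih i l) (hAB l j) (hA l j) (pow_apply_nonneg hB k i l)

theorem hasSum_pow_apply_inv_one_sub [RCLike α] {A : Matrix n n α} (hA : ‖A‖ < 1) (i j : n) :
    HasSum (fun k => (A ^ k) i j) ((1 - A)⁻¹ i j) := by
  rw [nonsing_inv_eq_ringInverse]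
  exact Pi.hasSum.mp (Pi.hasSum.mp (hasSum_geom_series_inverse A hA) i) j

end Matrix

namespace Substochastic

variable {S : Type*} [Fintype S] {P : Matrix S S ℝ}

theorem norm_le_one (hP : Substochastic P) : ‖P‖ ≤ 1 := by
  rw [linfty_opNorm_def, ← NNReal.coe_one, NNReal.coe_le_coe, Finset.sup_le_iff]
  intro i _
  rw [← NNReal.coe_le_coe, NNReal.coe_sum]
  simpa only [NNReal.coe_one, coe_nnnorm, Real.norm_of_nonneg (hP.1 i _)] using hP.2 i

theorem norm_smul_lt_one (hP : Substochastic P) {α : ℝ} (hα0 : 0 ≤ α) (hα1 : α < 1) :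
    ‖α • P‖ < 1 :=
  calc ‖α • P‖ ≤ ‖α‖ * ‖P‖ := norm_smul_le α P
    _ ≤ α * 1 := by
      rw [Real.norm_of_nonneg hα0]
      exact mul_le_mul_of_nonneg_left hP.norm_le_one hα0
    _ < 1 := by linarith

end Substochastic

theorem stmt_3_general {S : Type*} [Fintype S] [DecidableEq S]
    (Q P : Matrix S S ℝ) (hQ : Substochastic Q) (hP : Substochastic P)
    (hQP : ∀ s s', Q s s' ≤ P s s')
    (α : ℝ) (hα0 : 0 < α) (hα1 : α < 1) :
    ∀ s s', (1 - α • Q)⁻¹ s s' ≤ (1 - α • P)⁻¹ s s' := by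
  intro s s'
  refine hasSum_le (fun k => pow_apply_le_pow_apply (fun i j => ?_) (fun i j => ?_) k s s')
    (hasSum_pow_apply_inv_one_sub (hQ.norm_smul_lt_one hα0.le hα1) s s')
    (hasSum_pow_apply_inv_one_sub (hP.norm_smul_lt_one hα0.le hα1) s s')
  · exact mul_nonneg hα0.le (hQ.1 i j)
  · exact mul_le_mul_of_nonneg_left (hQP i j) hα0.le

theorem stmt_3 {S : Type*} [Fintype S] [Nonempty S] [DecidableEq S]
    (Q P : Matrix S S ℝ) (hQ : Substochastic Q) (hP : Substochastic P)
    (hQP : ∀ s s', Q s s' ≤ P s s')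
    (α : ℝ) (hα0 : 0 < α) (hα1 : α < 1) :
    ∀ s s', (1 - α • Q)⁻¹ s s' ≤ (1 - α • P)⁻¹ s s' :=
  stmt_3_general Q P hQ hP hQP α hα0 hα1
end

section
/- Let S be a nonempty finite type, let P : Matrix S S ℝ be substochastic, let α be a real number with 0 < α < 1, and let γ : S → ℝ satisfy γ s > 0 for every s. Define w : S → ℝ by w s' = (1-α) * ∑_s γ s * (1 - α • P)⁻¹ s s' (the scaled row-vector–matrix product). Then w s' ≥ (1-α) * γ s' for every s'; in particular w s' > 0 for every s'. -/
open Matrix BigOperators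

/-!
For `A = α • P` the entries are nonnegative and every row sum is below `1`, so `v = b + A v` with
`b ≥ 0` forces `v ≥ 0`: at a minimum `v i₀ < 0` we would get `v i₀ ≥ (∑ₖ A i₀ k) v i₀ > v i₀`.
This discrete minimum principle makes `1 - A` invertible and, applied to the columns of
`M = (1 - A)⁻¹ = 1 + A M`, gives `M ≥ 0` and then `M ≥ 1` entrywise. Hence
`∑ₛ γ s M s s' ≥ γ s'`.
-/

namespace Matrix

variable {S : Type*} [Fintype S]

theorem nonneg_of_eq_add_mulVec {A : Matrix S S ℝ} (hA0 : ∀ i j, 0 ≤ A i j)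
    (hA1 : ∀ i, ∑ j, A i j < 1) {b v : S → ℝ} (hb : 0 ≤ b) (hv : v = b + A *ᵥ v) : 0 ≤ v := by
  by_contra hneg
  obtain ⟨i, hi⟩ : ∃ i, v i < 0 := by simpa [Pi.le_def] using hneg
  obtain ⟨i₀, -, hmin⟩ := Finset.univ.exists_min_image v ⟨i, Finset.mem_univ i⟩
  have hi₀ : v i₀ < 0 := (hmin i (Finset.mem_univ i)).trans_lt hi
  have : (∑ k, A i₀ k) * v i₀ ≤ v i₀ :=
    calc (∑ k, A i₀ k) * v i₀ = ∑ k, A i₀ k * v i₀ := Finset.sum_mul ..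
      _ ≤ ∑ k, A i₀ k * v k :=
        Finset.sum_le_sum fun k hk => mul_le_mul_of_nonneg_left (hmin k hk) (hA0 i₀ k)
      _ ≤ b i₀ + (A *ᵥ v) i₀ := le_add_of_nonneg_left (hb i₀)
      _ = v i₀ := (congrFun hv i₀).symm
  nlinarith [hA1 i₀]

variable [DecidableEq S]

theorem isUnit_det_one_sub {A : Matrix S S ℝ} (hA0 : ∀ i j, 0 ≤ A i j)
    (hA1 : ∀ i, ∑ j, A i j < 1) : IsUnit (1 - A).det := by
  rw [isUnit_iff_ne_zero, Ne, ← exists_mulVec_eq_zero_iff]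
  rintro ⟨v, hv0, hv⟩
  have hfix : ∀ u : S → ℝ, (1 - A) *ᵥ u = 0 → u = 0 + A *ᵥ u := fun u hu => by
    rw [sub_mulVec, one_mulVec, sub_eq_zero] at hu
    rwa [zero_add]
  have hpos := nonneg_of_eq_add_mulVec hA0 hA1 le_rfl (hfix v hv)
  have hneg := nonneg_of_eq_add_mulVec hA0 hA1 le_rfl (hfix (-v) (by rw [mulVec_neg, hv, neg_zero]))
  exact hv0 (le_antisymm (neg_nonneg.mp hneg) hpos)

theorem one_le_inv_one_sub {A : Matrix S S ℝ} (hA0 : ∀ i j, 0 ≤ A i j)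
    (hA1 : ∀ i, ∑ j, A i j < 1) (i j : S) : (1 : Matrix S S ℝ) i j ≤ (1 - A)⁻¹ i j := by
  set M := (1 - A)⁻¹
  have hM : M = 1 + A * M := by
    have := mul_nonsing_inv _ (isUnit_det_one_sub hA0 hA1)
    rw [sub_mul, one_mul, sub_eq_iff_eq_add] at this
    exact this
  have hM0 : ∀ k l, 0 ≤ M k l := fun k l =>
    nonneg_of_eq_add_mulVec hA0 hA1 (b := fun k => (1 : Matrix S S ℝ) k l)
      (fun k => by simp only [Pi.zero_apply, one_apply]; split_ifs <;> norm_num) (funext fun k => congrFun₂ hM k l) k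
  calc (1 : Matrix S S ℝ) i j ≤ (1 : Matrix S S ℝ) i j + (A * M) i j :=
        le_add_of_nonneg_right (Finset.sum_nonneg fun k _ => mul_nonneg (hA0 i k) (hM0 k j))
    _ = M i j := by rw [← add_apply, ← hM]

end Matrix

theorem Substochastic.smul_rowSum_lt_one {S : Type*} [Fintype S] {P : Matrix S S ℝ}
    (hP : Substochastic P) {α : ℝ} (hα0 : 0 ≤ α) (hα1 : α < 1) (i : S) :
    ∑ j, (α • P) i j < 1 :=
  calc ∑ j, (α • P) i j = α * ∑ j, P i j := by simp only [Matrix.smul_apply, smul_eq_mul, Finset.mul_sum]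
    _ ≤ α := mul_le_of_le_one_right hα0 (hP.2 i)
    _ < 1 := hα1

theorem stmt_4_general {S : Type*} [Fintype S] [DecidableEq S]
    (P : Matrix S S ℝ) (hP : Substochastic P)
    (α : ℝ) (hα0 : 0 < α) (hα1 : α < 1)
    (γ : S → ℝ) (hγ : ∀ s, 0 < γ s)
    (w : S → ℝ) (hw : ∀ s', w s' = (1 - α) * ∑ s, γ s * (1 - α • P)⁻¹ s s') :
    (∀ s', (1 - α) * γ s' ≤ w s') ∧ ∀ s', 0 < w s' := by
  have hA0 : ∀ i j, 0 ≤ (α • P) i j := fun i j => mul_nonneg hα0.le (hP.1 i j)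
  have hle : ∀ s', (1 - α) * γ s' ≤ w s' := fun s' => by
    rw [hw s']
    refine mul_le_mul_of_nonneg_left ?_ (sub_nonneg.mpr hα1.le)
    calc γ s' = ∑ s, γ s * (1 : Matrix S S ℝ) s s' := by simp [one_apply]
      _ ≤ ∑ s, γ s * (1 - α • P)⁻¹ s s' :=
        Finset.sum_le_sum fun s _ => mul_le_mul_of_nonneg_left
          (one_le_inv_one_sub hA0 (hP.smul_rowSum_lt_one hα0.le hα1) s s') (hγ s).le
  exact ⟨hle, fun s' => (mul_pos (sub_pos.mpr hα1) (hγ s')).trans_le (hle s')⟩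

theorem stmt_4 {S : Type*} [Fintype S] [Nonempty S] [DecidableEq S]
    (P : Matrix S S ℝ) (hP : Substochastic P)
    (α : ℝ) (hα0 : 0 < α) (hα1 : α < 1)
    (γ : S → ℝ) (hγ : ∀ s, 0 < γ s)
    (w : S → ℝ) (hw : ∀ s', w s' = (1 - α) * ∑ s, γ s * (1 - α • P)⁻¹ s s') :
    (∀ s', (1 - α) * γ s' ≤ w s') ∧ ∀ s', 0 < w s' :=
  stmt_4_general P hP α hα0 hα1 γ hγ w hw
end

section
/- With the CMDP data and uncertainty-set data below, assume γ s > 0 for every s, and let u be an admissible deviation. Then the matrix P_f(u) is stochastic (entrywise nonnegative with all row sums equal to 1), the matrix 1 - α • P_f(u) is invertible, and, defining w : S → ℝ by w s' = (1-α) * ∑_s γ s * (1 - α • P_f(u))⁻¹ s s' and z : (s : S) → (A s × S) → ℝ by z s (a, s') = w s * u s a s', the pair (w, z) belongs to the inner-problem feasible set Q, and ∑_s w s * c_f s = (1-α) * (γ ⬝ᵥ ((1 - α • P_f(u))⁻¹).mulVec c_f). -/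
open Matrix BigOperators

/-- The Euclidean norm of a vector indexed by a finite type. -/
noncomputable def euclNorm {n : Type*} [Fintype n] (v : n → ℝ) : ℝ :=
  Real.sqrt (∑ i, v i ^ 2)

/-!
For a row-stochastic `P` and `0 ≤ α < 1`, the matrix `1 - α • P` obeys a minimum principle: if
`(1 - α • P) *ᵥ v ≥ 0`, then at a coordinate `k` where `v` is minimal,
`v k ≥ α * (P *ᵥ v) k ≥ α * v k`, so `v ≥ 0`. This yields both the invertibility of `1 - α • P_f(u)`
and the entrywise nonnegativity of its inverse, hence `w ≥ 0`. By construction `w` solves the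
balance equation `w ᵥ* (1 - α • P_f(u)) = (1 - α) • γ`; splitting `P_f(u)` into `P̄_f` and the part
coming from `u` turns it into the linear constraint of `Q`, and it also gives `w ≥ (1 - α) • γ`.
The remaining constraints of `Q` are those of the admissible `u`, scaled by `w s ≥ 0`.
-/

open Finset

theorem euclNorm_smul_of_nonneg {n : Type*} [Fintype n] {c : ℝ} (hc : 0 ≤ c) (v : n → ℝ) :
    euclNorm (c • v) = c * euclNorm v := by
  simp only [euclNorm, Pi.smul_apply, smul_eq_mul, mul_pow, ← mul_sum]
  rw [Real.sqrt_mul (sq_nonneg c), Real.sqrt_sq hc]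

namespace Matrix

variable {n : Type*} [Fintype n] [DecidableEq n] {P : Matrix n n ℝ} {α : ℝ}

theorem nonneg_of_one_sub_smul_mulVec_nonneg (hP : P ∈ rowStochastic ℝ n) (hα0 : 0 ≤ α)
    (hα1 : α < 1) {v : n → ℝ} (hv : 0 ≤ (1 - α • P) *ᵥ v) : 0 ≤ v := by
  intro i
  obtain ⟨k, -, hk⟩ := exists_min_image univ v ⟨i, mem_univ i⟩
  have hPv : v k ≤ (P *ᵥ v) k :=
    calc v k = ∑ j, P k j * v k := by rw [← sum_mul, sum_row_of_mem_rowStochastic hP, one_mul]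
      _ ≤ ∑ j, P k j * v j :=
        sum_le_sum fun j _ => mul_le_mul_of_nonneg_left (hk j (mem_univ j)) (hP.1 k j)
  have hvk : 0 ≤ v k - α * (P *ᵥ v) k := by
    simpa [sub_mulVec, smul_mulVec] using hv k
  have : 0 ≤ v k := by nlinarith [mul_le_mul_of_nonneg_left hPv hα0]
  exact this.trans (hk i (mem_univ i))

theorem isUnit_one_sub_smul_of_mem_rowStochastic (hP : P ∈ rowStochastic ℝ n) (hα0 : 0 ≤ α)
    (hα1 : α < 1) : IsUnit (1 - α • P) := by
  have hle : ∀ v w, (1 - α • P) *ᵥ v = (1 - α • P) *ᵥ w → w ≤ v := fun v w h =>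
    sub_nonneg.1 <| nonneg_of_one_sub_smul_mulVec_nonneg hP hα0 hα1 <| by
      rw [mulVec_sub, h, sub_self]
  exact mulVec_injective_iff_isUnit.1 fun v w h => le_antisymm (hle w v h.symm) (hle v w h)

theorem inv_one_sub_smul_nonneg (hP : P ∈ rowStochastic ℝ n) (hα0 : 0 ≤ α) (hα1 : α < 1)
    (i j : n) : 0 ≤ (1 - α • P)⁻¹ i j := by
  have hdet := (isUnit_iff_isUnit_det _).1 (isUnit_one_sub_smul_of_mem_rowStochastic hP hα0 hα1)
  have hcol : 0 ≤ (1 - α • P)⁻¹ *ᵥ Pi.single j 1 :=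
    nonneg_of_one_sub_smul_mulVec_nonneg hP hα0 hα1 <| by
      rw [mulVec_mulVec, mul_nonsing_inv _ hdet, one_mulVec]
      exact Pi.single_nonneg.2 zero_le_one
  simpa [mulVec_single_one] using hcol i

theorem vecMul_inv_one_sub_smul_nonneg (hP : P ∈ rowStochastic ℝ n) (hα0 : 0 ≤ α) (hα1 : α < 1)
    {γ : n → ℝ} (hγ : 0 ≤ γ) : 0 ≤ γ ᵥ* (1 - α • P)⁻¹ := fun j =>
  sum_nonneg fun i _ => mul_nonneg (hγ i) (inv_one_sub_smul_nonneg hP hα0 hα1 i j)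

theorem of_sum_mul_mem_rowStochastic {S : Type*} [Fintype S] [DecidableEq S] {A : S → Type*}
    [∀ s, Fintype (A s)] {f : (s : S) → A s → ℝ} {q : (s : S) → A s → S → ℝ}
    (hf0 : ∀ s a, 0 ≤ f s a) (hf1 : ∀ s, ∑ a, f s a = 1)
    (hq0 : ∀ s a s', 0 ≤ q s a s') (hq1 : ∀ s a, ∑ s', q s a s' = 1) :
    of (fun s s' => ∑ a, f s a * q s a s') ∈ rowStochastic ℝ S := by
  refine mem_rowStochastic_iff_sum.2
    ⟨fun s s' => sum_nonneg fun a _ => mul_nonneg (hf0 s a) (hq0 s a s'), fun s => ?_⟩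
  simp only [of_apply]
  rw [sum_comm]
  simp [← mul_sum, hq1, hf1]

end Matrix

theorem stmt_9_general {S : Type*} [Fintype S] [DecidableEq S]
    {A : S → Type*} [∀ s, Fintype (A s)]
    -- stationary policy
    (f : (s : S) → A s → ℝ) (hf0 : ∀ s a, 0 ≤ f s a) (hf1 : ∀ s, ∑ a, f s a = 1)
    -- observed transition probabilities
    (pbar : (s : S) → A s → S → ℝ)
    (hpbar1 : ∀ s a, ∑ s', pbar s a s' = 1)
    (α : ℝ) (hα0 : 0 < α) (hα1 : α < 1)
    -- initial distribution, positive everywhere (Assumption 3.2)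
    (γ : S → ℝ) (hγpos : ∀ s, 0 < γ s)
    -- cost vector
    (cf : S → ℝ)
    -- uncertainty-set data
    (ℓp ℓsc : S → ℕ)
    (B : (s : S) → Matrix (Fin (ℓp s)) (A s × S) ℝ) (b : (s : S) → Fin (ℓp s) → ℝ)
    (M : (s : S) → Matrix (A s × S) (Fin (ℓsc s)) ℝ) (m : (s : S) → Fin (ℓsc s) → ℝ)
    (x : (s : S) → A s × S → ℝ) (y : S → ℝ)
    -- an admissible deviation
    (u : (s : S) → A s → S → ℝ)
    (hu1 : ∀ s, ∀ i, (B s).mulVec (fun p : A s × S => u s p.1 p.2) i ≤ b s i)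
    (hu2 : ∀ s, euclNorm ((M s)ᵀ.mulVec (fun p : A s × S => u s p.1 p.2) + m s)
             ≤ x s ⬝ᵥ (fun p : A s × S => u s p.1 p.2) + y s)
    (hu3 : ∀ s a s', 0 ≤ pbar s a s' + u s a s')
    (hu4 : ∀ s a, ∑ s', u s a s' = 0)
    -- perturbed and observed transition matrices under f
    (Pfu : Matrix S S ℝ)
    (hPfu : ∀ s s', Pfu s s' = ∑ a, f s a * (pbar s a s' + u s a s'))
    (Pbarf : Matrix S S ℝ)
    (hPbarf : ∀ s s', Pbarf s s' = ∑ a, f s a * pbar s a s')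
    -- the constructed pair (w, z)
    (w : S → ℝ) (hw : ∀ s', w s' = (1 - α) * ∑ s, γ s * (1 - α • Pfu)⁻¹ s s')
    (z : (s : S) → A s × S → ℝ) (hz : ∀ s a s', z s (a, s') = w s * u s a s') :
    -- P_f(u) is stochastic
    ((∀ s s', 0 ≤ Pfu s s') ∧ (∀ s, ∑ s', Pfu s s' = 1)) ∧
    -- 1 - α • P_f(u) is invertible
    IsUnit (1 - α • Pfu) ∧
    -- (w, z) belongs to the inner-problem feasible set Q
    ((∀ s, ∀ i, (B s).mulVec (z s) i ≤ w s * b s i) ∧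
     (∀ s, euclNorm ((M s)ᵀ.mulVec (z s) + w s • m s) ≤ x s ⬝ᵥ z s + y s * w s) ∧
     (∀ s, (1 - α) * γ s ≤ w s) ∧
     (∀ s' : S,
        (∑ s, w s * ((if s = s' then (1 : ℝ) else 0) - α * Pbarf s s'))
          - α * ∑ s, ∑ a, f s a * z s (a, s') = (1 - α) * γ s')) ∧
    -- the objective values agree
    ∑ s, w s * cf s = (1 - α) * (γ ⬝ᵥ ((1 - α • Pfu)⁻¹).mulVec cf) := by
  have hP : Pfu ∈ rowStochastic ℝ S := by
    rw [show Pfu = _ from Matrix.ext hPfu]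
    refine of_sum_mul_mem_rowStochastic hf0 hf1 hu3 fun s a => ?_
    rw [sum_add_distrib, hpbar1, hu4, add_zero]
  have hU := isUnit_one_sub_smul_of_mem_rowStochastic hP hα0.le hα1
  have hw_eq : w = (1 - α) • (γ ᵥ* (1 - α • Pfu)⁻¹) := funext fun s' => by
    simp [hw, vecMul, dotProduct]
  have hw0 : 0 ≤ w := hw_eq ▸ smul_nonneg (sub_nonneg.2 hα1.le)
    (vecMul_inv_one_sub_smul_nonneg hP hα0.le hα1 fun s => (hγpos s).le)
  have hbalance : w ᵥ* (1 - α • Pfu) = (1 - α) • γ := by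
    rw [hw_eq, smul_vecMul, vecMul_vecMul,
      nonsing_inv_mul _ ((isUnit_iff_isUnit_det _).1 hU), vecMul_one]
  have hbal : ∀ s, w s - α * (w ᵥ* Pfu) s = (1 - α) * γ s := fun s => by
    simpa [vecMul_sub, vecMul_smul] using congr_fun hbalance s
  have hz_eq : ∀ s, z s = w s • fun p : A s × S => u s p.1 p.2 := fun s =>
    funext fun ⟨a, s'⟩ => hz s a s'
  refine ⟨mem_rowStochastic_iff_sum.1 hP, hU,
    ⟨fun s i => ?_, fun s => ?_, fun s => ?_, fun s' => ?_⟩, ?_⟩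
  · rw [hz_eq, mulVec_smul]
    exact mul_le_mul_of_nonneg_left (hu1 s i) (hw0 s)
  · rw [hz_eq, mulVec_smul, ← smul_add, euclNorm_smul_of_nonneg (hw0 s), dotProduct_smul,
      smul_eq_mul]
    linarith [mul_le_mul_of_nonneg_left (hu2 s) (hw0 s)]
  · linarith [hbal s, mul_nonneg hα0.le (nonneg_vecMul_of_mem_rowStochastic hP hw0 s)]
  · have hfz : ∀ s, ∑ a, f s a * z s (a, s') = w s * Pfu s s' - w s * Pbarf s s' := fun s => by
      simp only [hz, hPfu, hPbarf, mul_sum, ← sum_sub_distrib]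
      exact sum_congr rfl fun a _ => by ring
    rw [sum_congr rfl fun s _ => hfz s, ← hbal s']
    simp only [vecMul, dotProduct, mul_sub, sum_sub_distrib, mul_ite, mul_one, mul_zero,
      sum_ite_eq', mem_univ, if_true, mul_sum]
    simp only [mul_left_comm _ α]
    ring
  · calc ∑ s, w s * cf s = w ⬝ᵥ cf := rfl
      _ = _ := by rw [hw_eq, smul_dotProduct, dotProduct_mulVec, smul_eq_mul]

theorem stmt_9 {S : Type*} [Fintype S] [Nonempty S] [DecidableEq S]
    {A : S → Type*} [∀ s, Fintype (A s)] [∀ s, Nonempty (A s)]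
    -- stationary policy
    (f : (s : S) → A s → ℝ) (hf0 : ∀ s a, 0 ≤ f s a) (hf1 : ∀ s, ∑ a, f s a = 1)
    -- observed transition probabilities
    (pbar : (s : S) → A s → S → ℝ)
    (hpbar0 : ∀ s a s', 0 ≤ pbar s a s') (hpbar1 : ∀ s a, ∑ s', pbar s a s' = 1)
    (α : ℝ) (hα0 : 0 < α) (hα1 : α < 1)
    -- initial distribution, positive everywhere (Assumption 3.2)
    (γ : S → ℝ) (hγpos : ∀ s, 0 < γ s) (hγ1 : ∑ s, γ s = 1)
    -- cost vector
    (cf : S → ℝ)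
    -- uncertainty-set data
    (ℓp ℓsc : S → ℕ)
    (B : (s : S) → Matrix (Fin (ℓp s)) (A s × S) ℝ) (b : (s : S) → Fin (ℓp s) → ℝ)
    (M : (s : S) → Matrix (A s × S) (Fin (ℓsc s)) ℝ) (m : (s : S) → Fin (ℓsc s) → ℝ)
    (x : (s : S) → A s × S → ℝ) (y : S → ℝ)
    -- an admissible deviation
    (u : (s : S) → A s → S → ℝ)
    (hu1 : ∀ s, ∀ i, (B s).mulVec (fun p : A s × S => u s p.1 p.2) i ≤ b s i)
    (hu2 : ∀ s, euclNorm ((M s)ᵀ.mulVec (fun p : A s × S => u s p.1 p.2) + m s)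
             ≤ x s ⬝ᵥ (fun p : A s × S => u s p.1 p.2) + y s)
    (hu3 : ∀ s a s', 0 ≤ pbar s a s' + u s a s')
    (hu4 : ∀ s a, ∑ s', u s a s' = 0)
    -- perturbed and observed transition matrices under f
    (Pfu : Matrix S S ℝ)
    (hPfu : ∀ s s', Pfu s s' = ∑ a, f s a * (pbar s a s' + u s a s'))
    (Pbarf : Matrix S S ℝ)
    (hPbarf : ∀ s s', Pbarf s s' = ∑ a, f s a * pbar s a s')
    -- the constructed pair (w, z)
    (w : S → ℝ) (hw : ∀ s', w s' = (1 - α) * ∑ s, γ s * (1 - α • Pfu)⁻¹ s s')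
    (z : (s : S) → A s × S → ℝ) (hz : ∀ s a s', z s (a, s') = w s * u s a s') :
    -- P_f(u) is stochastic
    ((∀ s s', 0 ≤ Pfu s s') ∧ (∀ s, ∑ s', Pfu s s' = 1)) ∧
    -- 1 - α • P_f(u) is invertible
    IsUnit (1 - α • Pfu) ∧
    -- (w, z) belongs to the inner-problem feasible set Q
    ((∀ s, ∀ i, (B s).mulVec (z s) i ≤ w s * b s i) ∧
     (∀ s, euclNorm ((M s)ᵀ.mulVec (z s) + w s • m s) ≤ x s ⬝ᵥ z s + y s * w s) ∧
     (∀ s, (1 - α) * γ s ≤ w s) ∧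
     (∀ s' : S,
        (∑ s, w s * ((if s = s' then (1 : ℝ) else 0) - α * Pbarf s s'))
          - α * ∑ s, ∑ a, f s a * z s (a, s') = (1 - α) * γ s')) ∧
    -- the objective values agree
    ∑ s, w s * cf s = (1 - α) * (γ ⬝ᵥ ((1 - α • Pfu)⁻¹).mulVec cf) :=
  stmt_9_general f hf0 hf1 pbar hpbar1 α hα0 hα1 γ hγpos cf ℓp ℓsc B b M m x y u hu1 hu2 hu3 hu4 Pfu
    hPfu Pbarf hPbarf w hw z hz
end

section
/- With the CMDP data and uncertainty-set data below, assume γ s > 0 for every s, and let (w, z) belong to the inner-problem feasible set Q. Then w s > 0 for every s, and, defining the deviation u by u s a s' = z s (a, s') / w s, for every s the deviation satisfies the polyhedral constraint (B s).mulVec (u s) ≤ b s entrywise and the second-order cone constraint ‖(M s)ᵀ.mulVec (u s) + m s‖ ≤ (x s) ⬝ᵥ (u s) + y s, and for every s', ∑_s w s * ((if s = s' then 1 else 0) - α * P_f(u) s s') = (1-α) * γ s'. -/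
/-!
Since `w s ≥ (1 - α) γ s > 0`, the pair `(w, z)` is the perspective of `(1, u)` with `u s = z s / w s`:
the polyhedral and second-order cone constraints are positively homogeneous in `(z s, w s)`, so they
survive division by `w s`, and the flow-balance equation of `Q` is the one for `P_f(u)` after
substituting `z s (a, s') = w s * u s a s'`.
-/

open Matrix BigOperators

lemma euclNorm_smul {n : Type*} [Fintype n] (c : ℝ) (v : n → ℝ) :
    euclNorm (c • v) = |c| * euclNorm v := by
  unfold euclNorm
  rw [← Real.sqrt_sq_eq_abs, ← Real.sqrt_mul (sq_nonneg c), Finset.mul_sum]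
  simp only [Pi.smul_apply, smul_eq_mul, mul_pow]

section Perspective

variable {ι κ : Type*} [Fintype κ] {c : ℝ}

lemma mulVec_inv_smul_le {B : Matrix ι κ ℝ} {z : κ → ℝ} {b : ι → ℝ} (hc : 0 < c)
    (h : ∀ i, B.mulVec z i ≤ c * b i) (i : ι) : B.mulVec (c⁻¹ • z) i ≤ b i := by
  rw [mulVec_smul, Pi.smul_apply, smul_eq_mul, inv_mul_le_iff₀ hc]
  exact h i

lemma euclNorm_mulVec_inv_smul_add_le [Fintype ι] {N : Matrix ι κ ℝ} {z x : κ → ℝ}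
    {m : ι → ℝ} {y : ℝ} (hc : 0 < c) (h : euclNorm (N.mulVec z + c • m) ≤ x ⬝ᵥ z + y * c) :
    euclNorm (N.mulVec (c⁻¹ • z) + m) ≤ x ⬝ᵥ (c⁻¹ • z) + y := by
  have hlhs : N.mulVec (c⁻¹ • z) + m = c⁻¹ • (N.mulVec z + c • m) := by
    rw [mulVec_smul, smul_add, smul_smul, inv_mul_cancel₀ hc.ne', one_smul]
  have hrhs : x ⬝ᵥ (c⁻¹ • z) + y = c⁻¹ * (x ⬝ᵥ z + y * c) := by
    rw [dotProduct_smul, smul_eq_mul]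
    field_simp
  rw [hlhs, hrhs, euclNorm_smul, abs_of_pos (inv_pos.mpr hc)]
  exact mul_le_mul_of_nonneg_left h (inv_nonneg.mpr hc.le)

end Perspective

lemma mul_sum_mul_add_div {ι : Type*} (s : Finset ι) (f p z : ι → ℝ) {w : ℝ} (hw : w ≠ 0) :
    w * ∑ a ∈ s, f a * (p a + z a / w) = w * ∑ a ∈ s, f a * p a + ∑ a ∈ s, f a * z a := by
  rw [Finset.mul_sum, Finset.mul_sum, ← Finset.sum_add_distrib]
  refine Finset.sum_congr rfl fun a _ => ?_
  field_simp

theorem stmt_10_general {S : Type*} [Fintype S] [DecidableEq S]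
    {A : S → Type*} [∀ s, Fintype (A s)]
    -- stationary policy
    (f : (s : S) → A s → ℝ)
    -- observed transition probabilities
    (pbar : (s : S) → A s → S → ℝ)
    (α : ℝ) (hα1 : α < 1)
    -- initial distribution, positive everywhere (Assumption 3.2)
    (γ : S → ℝ) (hγpos : ∀ s, 0 < γ s)
    -- uncertainty-set data
    (ℓp ℓsc : S → ℕ)
    (B : (s : S) → Matrix (Fin (ℓp s)) (A s × S) ℝ) (b : (s : S) → Fin (ℓp s) → ℝ)
    (M : (s : S) → Matrix (A s × S) (Fin (ℓsc s)) ℝ) (m : (s : S) → Fin (ℓsc s) → ℝ)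
    (x : (s : S) → A s × S → ℝ) (y : S → ℝ)
    -- observed transition matrix under f
    (Pbarf : Matrix S S ℝ)
    (hPbarf : ∀ s s', Pbarf s s' = ∑ a, f s a * pbar s a s')
    -- a pair (w, z) in the inner-problem feasible set Q
    (w : S → ℝ) (z : (s : S) → A s × S → ℝ)
    (hQ1 : ∀ s, ∀ i, (B s).mulVec (z s) i ≤ w s * b s i)
    (hQ2 : ∀ s, euclNorm ((M s)ᵀ.mulVec (z s) + w s • m s) ≤ x s ⬝ᵥ z s + y s * w s)
    (hQ3 : ∀ s, (1 - α) * γ s ≤ w s)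
    (hQ4 : ∀ s' : S,
        (∑ s, w s * ((if s = s' then (1 : ℝ) else 0) - α * Pbarf s s'))
          - α * ∑ s, ∑ a, f s a * z s (a, s') = (1 - α) * γ s')
    -- the constructed deviation u
    (u : (s : S) → A s → S → ℝ) (hu : ∀ s a s', u s a s' = z s (a, s') / w s)
    -- perturbed transition matrix under f
    (Pfu : Matrix S S ℝ)
    (hPfu : ∀ s s', Pfu s s' = ∑ a, f s a * (pbar s a s' + u s a s')) :
    -- w is positive
    (∀ s, 0 < w s) ∧
    -- u satisfies the polyhedral constraints
    (∀ s, ∀ i, (B s).mulVec (fun p : A s × S => u s p.1 p.2) i ≤ b s i) ∧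
    -- u satisfies the second-order cone constraints
    (∀ s, euclNorm ((M s)ᵀ.mulVec (fun p : A s × S => u s p.1 p.2) + m s)
        ≤ x s ⬝ᵥ (fun p : A s × S => u s p.1 p.2) + y s) ∧
    -- the flow-balance equations hold for P_f(u)
    (∀ s' : S,
        ∑ s, w s * ((if s = s' then (1 : ℝ) else 0) - α * Pfu s s')
          = (1 - α) * γ s') := by
  have hw (s : S) : 0 < w s := (mul_pos (by linarith) (hγpos s)).trans_le (hQ3 s)
  have hvec (s : S) : (fun p : A s × S => u s p.1 p.2) = (w s)⁻¹ • z s := by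
    funext p
    simp only [hu, Pi.smul_apply, smul_eq_mul, div_eq_inv_mul]
  have hrow (s s' : S) : w s * Pfu s s' = w s * Pbarf s s' + ∑ a, f s a * z s (a, s') := by
    simp only [hPfu, hPbarf, hu]
    exact mul_sum_mul_add_div _ _ _ _ (hw s).ne'
  refine ⟨hw, fun s => ?_, fun s => ?_, fun s' => ?_⟩
  · rw [hvec]
    exact mulVec_inv_smul_le (hw s) (hQ1 s)
  · rw [hvec]
    exact euclNorm_mulVec_inv_smul_add_le (hw s) (hQ2 s)
  · rw [← hQ4 s', Finset.mul_sum, ← Finset.sum_sub_distrib]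
    refine Finset.sum_congr rfl fun s _ => ?_
    linear_combination (-α) * hrow s s'

theorem stmt_10 {S : Type*} [Fintype S] [Nonempty S] [DecidableEq S]
    {A : S → Type*} [∀ s, Fintype (A s)] [∀ s, Nonempty (A s)]
    -- stationary policy
    (f : (s : S) → A s → ℝ) (hf0 : ∀ s a, 0 ≤ f s a) (hf1 : ∀ s, ∑ a, f s a = 1)
    -- observed transition probabilities
    (pbar : (s : S) → A s → S → ℝ)
    (hpbar0 : ∀ s a s', 0 ≤ pbar s a s') (hpbar1 : ∀ s a, ∑ s', pbar s a s' = 1)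
    (α : ℝ) (hα0 : 0 < α) (hα1 : α < 1)
    -- initial distribution, positive everywhere (Assumption 3.2)
    (γ : S → ℝ) (hγpos : ∀ s, 0 < γ s) (hγ1 : ∑ s, γ s = 1)
    -- uncertainty-set data
    (ℓp ℓsc : S → ℕ)
    (B : (s : S) → Matrix (Fin (ℓp s)) (A s × S) ℝ) (b : (s : S) → Fin (ℓp s) → ℝ)
    (M : (s : S) → Matrix (A s × S) (Fin (ℓsc s)) ℝ) (m : (s : S) → Fin (ℓsc s) → ℝ)
    (x : (s : S) → A s × S → ℝ) (y : S → ℝ)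
    -- observed transition matrix under f
    (Pbarf : Matrix S S ℝ)
    (hPbarf : ∀ s s', Pbarf s s' = ∑ a, f s a * pbar s a s')
    -- a pair (w, z) in the inner-problem feasible set Q
    (w : S → ℝ) (z : (s : S) → A s × S → ℝ)
    (hQ1 : ∀ s, ∀ i, (B s).mulVec (z s) i ≤ w s * b s i)
    (hQ2 : ∀ s, euclNorm ((M s)ᵀ.mulVec (z s) + w s • m s) ≤ x s ⬝ᵥ z s + y s * w s)
    (hQ3 : ∀ s, (1 - α) * γ s ≤ w s)
    (hQ4 : ∀ s' : S,
        (∑ s, w s * ((if s = s' then (1 : ℝ) else 0) - α * Pbarf s s'))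
          - α * ∑ s, ∑ a, f s a * z s (a, s') = (1 - α) * γ s')
    -- the constructed deviation u
    (u : (s : S) → A s → S → ℝ) (hu : ∀ s a s', u s a s' = z s (a, s') / w s)
    -- perturbed transition matrix under f
    (Pfu : Matrix S S ℝ)
    (hPfu : ∀ s s', Pfu s s' = ∑ a, f s a * (pbar s a s' + u s a s')) :
    -- w is positive
    (∀ s, 0 < w s) ∧
    -- u satisfies the polyhedral constraints
    (∀ s, ∀ i, (B s).mulVec (fun p : A s × S => u s p.1 p.2) i ≤ b s i) ∧
    -- u satisfies the second-order cone constraints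
    (∀ s, euclNorm ((M s)ᵀ.mulVec (fun p : A s × S => u s p.1 p.2) + m s)
        ≤ x s ⬝ᵥ (fun p : A s × S => u s p.1 p.2) + y s) ∧
    -- the flow-balance equations hold for P_f(u)
    (∀ s' : S,
        ∑ s, w s * ((if s = s' then (1 : ℝ) else 0) - α * Pfu s s')
          = (1 - α) * γ s') :=
  stmt_10_general f pbar α hα1 γ hγpos ℓp ℓsc B b M m x y Pbarf hPbarf w z hQ1 hQ2 hQ3 hQ4 u hu Pfu
    hPfu
end

section
/- With the CMDP data and uncertainty-set data below, let P_min : Matrix S S ℝ be substochastic with the property that every admissible deviation u satisfies P_min s s' ≤ p̄ s a s' + u s a s' for all s, a, s', and assume ∑_s γ s * (1 - α • P_min)⁻¹ s s' > 0 for every s' (Assumption B.1). Assume further that the polyhedral constraints enforce the probability-simplex conditions: for every s and every v : (A s × S) → ℝ with (B s).mulVec v ≤ b s entrywise, one has ∑_{s'} v (a, s') = 0 for every a and p̄ s a s' + v (a, s') ≥ 0 for all a, s'. Let Q' be the set of pairs (w, z) satisfying the same constraints as Q except that the constraint w s ≥ (1-α) * γ s is replaced by w s' ≥ (1-α) * ∑_s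 γ s * (1 - α • P_min)⁻¹ s s' for every s'. Then { (1-α) * (γ ⬝ᵥ ((1 - α • P_f(u))⁻¹).mulVec c_f) : u an admissible deviation } = { ∑_s w s * c_f s : (w, z) ∈ Q' }. -/
/-!
The map `u ↦ (w, z)`, with `w` the discounted state-occupancy measure of the perturbed chain
`P_f(u)` and `z s = w s • u s`, is a bijection from admissible deviations onto `Q'`, with inverse
`z s ↦ (w s)⁻¹ • z s`. Three facts make it work. The uncertainty constraints are positively
homogeneous in `(w s, z s)`, so they transfer once `w > 0`. The balance equation of `Q'` is
`w ᵥ* (1 - α • P_f(u)) = (1 - α) • γ`, whose unique solution is the occupancy measure, since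
`P_f(u)` is substochastic and so `1 - α • P_f(u)` is invertible by the Neumann series. Finally the
entries of `(1 - α • P)⁻¹ = ∑ₖ (α • P)ᵏ` are monotone in the nonnegative matrix `P`, so
`P_min ≤ P_f(u)` gives the lower bound on `w`, which is positive by Assumption B.1.
-/

open Matrix BigOperators

namespace Matrix

section Neumann

variable {n : Type*} [Fintype n] [DecidableEq n] {X Y : Matrix n n ℝ} {c : ℝ}

lemma pow_apply_mono (hX : ∀ i j, 0 ≤ X i j) (hXY : ∀ i j, X i j ≤ Y i j) (k : ℕ) (i j : n) :
    (X ^ k) i j ≤ (Y ^ k) i j := by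
  have hY : ∀ i j, 0 ≤ Y i j := fun i j => (hX i j).trans (hXY i j)
  induction k generalizing j with
  | zero => rfl
  | succ k ih =>
    rw [pow_succ, pow_succ, mul_apply, mul_apply]
    exact Finset.sum_le_sum fun l _ =>
      mul_le_mul (ih l) (hXY l j) (hX l j) (pow_apply_nonneg hY k i l)

lemma sum_pow_apply_le (hX : ∀ i j, 0 ≤ X i j) (hc : 0 ≤ c) (hrow : ∀ i, ∑ j, X i j ≤ c)
    (k : ℕ) (i : n) : ∑ j, (X ^ k) i j ≤ c ^ k := by
  induction k generalizing i with
  | zero => simp [one_apply]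
  | succ k ih =>
    calc ∑ j, (X ^ (k + 1)) i j = ∑ l, X i l * ∑ j, (X ^ k) l j := by
          simp only [pow_succ', mul_apply, Finset.mul_sum]
          exact Finset.sum_comm
      _ ≤ ∑ l, X i l * c ^ k :=
          Finset.sum_le_sum fun l _ => mul_le_mul_of_nonneg_left (ih l) (hX i l)
      _ ≤ c * c ^ k := by
          rw [← Finset.sum_mul]
          exact mul_le_mul_of_nonneg_right (hrow i) (pow_nonneg hc k)
      _ = c ^ (k + 1) := (pow_succ' c k).symm

variable (hX : ∀ i j, 0 ≤ X i j) (hc0 : 0 ≤ c) (hc1 : c < 1) (hrow : ∀ i, ∑ j, X i j ≤ c)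
include hX hc0 hc1 hrow

lemma summable_pow_apply (i j : n) : Summable fun k => (X ^ k) i j :=
  (summable_geometric_of_lt_one hc0 hc1).of_nonneg_of_le (fun k => pow_apply_nonneg hX k i j)
    fun k => (Finset.single_le_sum (fun l _ => pow_apply_nonneg hX k i l)
      (Finset.mem_univ j)).trans (sum_pow_apply_le hX hc0 hrow k i)

lemma one_sub_mul_tsum_pow_apply : (1 - X) * of (fun i j => ∑' k, (X ^ k) i j) = 1 := by
  have hsum : HasSum (fun k => X ^ k) (of fun i j => ∑' k, (X ^ k) i j) :=
    Pi.hasSum.mpr fun i => Pi.hasSum.mpr fun j => (summable_pow_apply hX hc0 hc1 hrow i j).hasSum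
  rw [← hsum.tsum_eq]
  exact hsum.summable.one_sub_mul_tsum_pow

lemma inv_one_sub_eq_tsum_pow_apply : (1 - X)⁻¹ = of fun i j => ∑' k, (X ^ k) i j :=
  inv_eq_right_inv (one_sub_mul_tsum_pow_apply hX hc0 hc1 hrow)

lemma isUnit_det_one_sub_s12 : IsUnit (1 - X).det :=
  isUnit_det_of_right_inverse (one_sub_mul_tsum_pow_apply hX hc0 hc1 hrow)

end Neumann

section Monotone

variable {n : Type*} [Fintype n] [DecidableEq n] {X Y : Matrix n n ℝ} {c : ℝ}

lemma inv_one_sub_apply_mono (hX : ∀ i j, 0 ≤ X i j) (hXY : ∀ i j, X i j ≤ Y i j) (hc0 : 0 ≤ c)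
    (hc1 : c < 1) (hrow : ∀ i, ∑ j, Y i j ≤ c) (i j : n) : (1 - X)⁻¹ i j ≤ (1 - Y)⁻¹ i j := by
  have hY : ∀ i j, 0 ≤ Y i j := fun i j => (hX i j).trans (hXY i j)
  have hrowX : ∀ i, ∑ j, X i j ≤ c := fun i =>
    (Finset.sum_le_sum fun j _ => hXY i j).trans (hrow i)
  rw [inv_one_sub_eq_tsum_pow_apply hX hc0 hc1 hrowX, inv_one_sub_eq_tsum_pow_apply hY hc0 hc1 hrow]
  exact Summable.tsum_le_tsum (fun k => pow_apply_mono hX hXY k i j)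
    (summable_pow_apply hX hc0 hc1 hrowX i j) (summable_pow_apply hY hc0 hc1 hrow i j)

end Monotone

lemma eq_vecMul_inv_iff {n R : Type*} [Fintype n] [DecidableEq n] [CommRing R]
    {A : Matrix n n R} (hA : IsUnit A.det) (v w : n → R) : v = w ᵥ* A⁻¹ ↔ v ᵥ* A = w := by
  constructor
  · rintro rfl
    rw [vecMul_vecMul, nonsing_inv_mul A hA, vecMul_one]
  · rintro rfl
    rw [vecMul_vecMul, mul_nonsing_inv A hA, vecMul_one]

end Matrix

section Substochastic

variable {S : Type*} [Fintype S] {P Q : Matrix S S ℝ} {α : ℝ}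

lemma Substochastic.sum_smul_apply_le (hP : Substochastic P) (hα : 0 ≤ α) (s : S) :
    ∑ s', (α • P) s s' ≤ α := by
  simpa [← Finset.mul_sum] using mul_le_mul_of_nonneg_left (hP.2 s) hα

variable [DecidableEq S]

lemma Substochastic.isUnit_det_one_sub_smul (hP : Substochastic P) (hα0 : 0 ≤ α) (hα1 : α < 1) :
    IsUnit (1 - α • P).det :=
  isUnit_det_one_sub_s12 (fun s s' => mul_nonneg hα0 (hP.1 s s')) hα0 hα1 (hP.sum_smul_apply_le hα0)

lemma Substochastic.inv_one_sub_smul_apply_mono (hQ : Substochastic Q)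
    (hP0 : ∀ s s', 0 ≤ P s s') (hPQ : ∀ s s', P s s' ≤ Q s s') (hα0 : 0 ≤ α) (hα1 : α < 1)
    (s s' : S) : (1 - α • P)⁻¹ s s' ≤ (1 - α • Q)⁻¹ s s' :=
  inv_one_sub_apply_mono (fun s s' => mul_nonneg hα0 (hP0 s s'))
    (fun s s' => mul_le_mul_of_nonneg_left (hPQ s s') hα0) hα0 hα1 (hQ.sum_smul_apply_le hα0) s s'

end Substochastic

section Homogenization

variable {ι κ : Type*} [Fintype κ] {t : ℝ}

lemma euclNorm_smul_s12 [Fintype ι] (ht : 0 ≤ t) (v : ι → ℝ) : euclNorm (t • v) = t * euclNorm v := by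
  simp only [euclNorm, Pi.smul_apply, smul_eq_mul, mul_pow, ← Finset.mul_sum]
  rw [Real.sqrt_mul (sq_nonneg t), Real.sqrt_sq ht]

lemma mulVec_smul_le_mul_iff (B : Matrix ι κ ℝ) (b : ι → ℝ) (v : κ → ℝ) (ht : 0 < t) :
    (∀ i, (B *ᵥ (t • v)) i ≤ t * b i) ↔ ∀ i, (B *ᵥ v) i ≤ b i := by
  simp only [mulVec_smul, Pi.smul_apply, smul_eq_mul, mul_le_mul_iff_right₀ ht]

lemma euclNorm_mulVec_smul_add_le_iff [Fintype ι] (N : Matrix ι κ ℝ) (m : ι → ℝ) (x v : κ → ℝ)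
    (y : ℝ) (ht : 0 < t) :
    euclNorm (N *ᵥ (t • v) + t • m) ≤ x ⬝ᵥ (t • v) + y * t ↔
      euclNorm (N *ᵥ v + m) ≤ x ⬝ᵥ v + y := by
  rw [mulVec_smul, ← smul_add, euclNorm_smul_s12 ht.le, dotProduct_smul, smul_eq_mul,
    mul_comm y t, ← mul_add, mul_le_mul_iff_right₀ ht]

end Homogenization

section Occupancy

variable {S : Type*} {A : S → Type*} [∀ s, Fintype (A s)]

/-- The paper's `P_f(u)` is `transitionMatrix f (p̄ + u)`. -/
def transitionMatrix (f : (s : S) → A s → ℝ) (p : (s : S) → A s → S → ℝ) : Matrix S S ℝ :=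
  of fun s s' => ∑ a, f s a * p s a s'

lemma le_transitionMatrix {f : (s : S) → A s → ℝ} {p : (s : S) → A s → S → ℝ} {P : Matrix S S ℝ}
    (hf0 : ∀ s a, 0 ≤ f s a) (hf1 : ∀ s, ∑ a, f s a = 1) (hPp : ∀ s a s', P s s' ≤ p s a s')
    (s s' : S) : P s s' ≤ transitionMatrix f p s s' :=
  calc P s s' = ∑ a, f s a * P s s' := by rw [← Finset.sum_mul, hf1, one_mul]
    _ ≤ transitionMatrix f p s s' :=
      Finset.sum_le_sum fun a _ => mul_le_mul_of_nonneg_left (hPp s a s') (hf0 s a)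

variable [Fintype S]

lemma transitionMatrix_substochastic {f : (s : S) → A s → ℝ} {p : (s : S) → A s → S → ℝ}
    (hf0 : ∀ s a, 0 ≤ f s a) (hf1 : ∀ s, ∑ a, f s a = 1) (hp0 : ∀ s a s', 0 ≤ p s a s')
    (hp1 : ∀ s a, ∑ s', p s a s' ≤ 1) : Substochastic (transitionMatrix f p) := by
  refine ⟨fun s s' => Finset.sum_nonneg fun a _ => mul_nonneg (hf0 s a) (hp0 s a s'), fun s => ?_⟩
  calc ∑ s', transitionMatrix f p s s' = ∑ a, f s a * ∑ s', p s a s' := by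
        simp only [transitionMatrix, of_apply, Finset.mul_sum]
        exact Finset.sum_comm
    _ ≤ ∑ a, f s a * 1 := Finset.sum_le_sum fun a _ => mul_le_mul_of_nonneg_left (hp1 s a) (hf0 s a)
    _ = 1 := by simp [hf1]

variable [DecidableEq S]

lemma balance_eq_vecMul (f : (s : S) → A s → ℝ) (pbar u : (s : S) → A s → S → ℝ) (α : ℝ)
    {w : S → ℝ} {z : (s : S) → A s × S → ℝ} (hz : ∀ s, z s = w s • Function.uncurry (u s))
    (s' : S) :
    (∑ s, w s * ((if s = s' then (1 : ℝ) else 0) - α * ∑ a, f s a * pbar s a s'))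
        - α * ∑ s, ∑ a, f s a * z s (a, s') =
      (w ᵥ* (1 - α • transitionMatrix f fun s a s' => pbar s a s' + u s a s')) s' := by
  simp only [hz, vecMul, dotProduct, transitionMatrix, Matrix.sub_apply, one_apply,
    Matrix.smul_apply, of_apply, Pi.smul_apply, Function.uncurry_apply_pair, smul_eq_mul, mul_add,
    Finset.sum_add_distrib, Finset.mul_sum, mul_sub, Finset.sum_sub_distrib]
  rw [sub_add_eq_sub_sub]
  congr 1
  exact Finset.sum_congr rfl fun s _ => Finset.sum_congr rfl fun a _ => by ring

noncomputable def discountedOccupancy (α : ℝ) (γ : S → ℝ) (P : Matrix S S ℝ) (s' : S) : ℝ :=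
  (1 - α) * ∑ σ, γ σ * (1 - α • P)⁻¹ σ s'

variable {α : ℝ} {γ : S → ℝ} {P Q : Matrix S S ℝ}

lemma discountedOccupancy_eq_vecMul :
    discountedOccupancy α γ P = ((1 - α) • γ) ᵥ* (1 - α • P)⁻¹ := by
  ext s'
  simp [discountedOccupancy, vecMul, dotProduct, Finset.mul_sum, mul_assoc]

lemma vecMul_one_sub_smul_eq_iff (hP : IsUnit (1 - α • P).det) (w : S → ℝ) :
    w ᵥ* (1 - α • P) = (1 - α) • γ ↔ w = discountedOccupancy α γ P := by
  rw [discountedOccupancy_eq_vecMul, eq_vecMul_inv_iff hP]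

lemma sum_discountedOccupancy_mul (c : S → ℝ) :
    ∑ s, discountedOccupancy α γ P s * c s = (1 - α) * (γ ⬝ᵥ (1 - α • P)⁻¹ *ᵥ c) := by
  change discountedOccupancy α γ P ⬝ᵥ c = _
  rw [discountedOccupancy_eq_vecMul, ← dotProduct_mulVec, smul_dotProduct, smul_eq_mul]

lemma discountedOccupancy_mono (hγ : ∀ s, 0 ≤ γ s) (hα0 : 0 ≤ α) (hα1 : α < 1)
    (hQ : Substochastic Q) (hP0 : ∀ s s', 0 ≤ P s s') (hPQ : ∀ s s', P s s' ≤ Q s s') (s' : S) :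
    discountedOccupancy α γ P s' ≤ discountedOccupancy α γ Q s' :=
  mul_le_mul_of_nonneg_left (Finset.sum_le_sum fun σ _ => mul_le_mul_of_nonneg_left
    (hQ.inv_one_sub_smul_apply_mono hP0 hPQ hα0 hα1 σ s') (hγ σ)) (sub_nonneg.2 hα1.le)

end Occupancy

theorem stmt_12_general {S : Type*} [Fintype S] [DecidableEq S]
    {A : S → Type*} [∀ s, Fintype (A s)]
    -- stationary policy
    (f : (s : S) → A s → ℝ) (hf0 : ∀ s a, 0 ≤ f s a) (hf1 : ∀ s, ∑ a, f s a = 1)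
    -- observed transition probabilities
    (pbar : (s : S) → A s → S → ℝ)
    (hpbar1 : ∀ s a, ∑ s', pbar s a s' = 1)
    (α : ℝ) (hα0 : 0 < α) (hα1 : α < 1)
    -- initial distribution
    (γ : S → ℝ) (hγ0 : ∀ s, 0 ≤ γ s)
    -- cost vector
    (cf : S → ℝ)
    -- uncertainty-set data
    (ℓp ℓsc : S → ℕ)
    (B : (s : S) → Matrix (Fin (ℓp s)) (A s × S) ℝ) (b : (s : S) → Fin (ℓp s) → ℝ)
    (M : (s : S) → Matrix (A s × S) (Fin (ℓsc s)) ℝ) (m : (s : S) → Fin (ℓsc s) → ℝ)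
    (x : (s : S) → A s × S → ℝ) (y : S → ℝ)
    -- the matrix P_min
    (Pmin : Matrix S S ℝ) (hPmin : Substochastic Pmin)
    -- P_min lower-bounds the perturbed transition probabilities of admissible deviations
    (hPminLe : ∀ u : (s : S) → A s → S → ℝ,
        (∀ s, (∀ i, (B s).mulVec (fun p : A s × S => u s p.1 p.2) i ≤ b s i) ∧
          euclNorm ((M s)ᵀ.mulVec (fun p : A s × S => u s p.1 p.2) + m s)
            ≤ x s ⬝ᵥ (fun p : A s × S => u s p.1 p.2) + y s) →
        ∀ s a s', Pmin s s' ≤ pbar s a s' + u s a s')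
    -- Assumption B.1
    (hB1 : ∀ s', 0 < ∑ s, γ s * (1 - α • Pmin)⁻¹ s s')
    -- the polyhedral constraints enforce the probability-simplex conditions
    (hB : ∀ s, ∀ v : A s × S → ℝ, (∀ i, (B s).mulVec v i ≤ b s i) →
        (∀ a, ∑ s', v (a, s') = 0) ∧ ∀ a s', 0 ≤ pbar s a s' + v (a, s')) :
    {r : ℝ | ∃ u : (s : S) → A s → S → ℝ,
        (∀ s, ∀ i, (B s).mulVec (fun p : A s × S => u s p.1 p.2) i ≤ b s i) ∧
        (∀ s, euclNorm ((M s)ᵀ.mulVec (fun p : A s × S => u s p.1 p.2) + m s)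
            ≤ x s ⬝ᵥ (fun p : A s × S => u s p.1 p.2) + y s) ∧
        r = (1 - α) * (γ ⬝ᵥ (((1 : Matrix S S ℝ)
              - α • Matrix.of fun s s' => ∑ a, f s a * (pbar s a s' + u s a s'))⁻¹).mulVec cf)}
      =
    {r : ℝ | ∃ (w : S → ℝ) (z : (s : S) → A s × S → ℝ),
        (∀ s, ∀ i, (B s).mulVec (z s) i ≤ w s * b s i) ∧
        (∀ s, euclNorm ((M s)ᵀ.mulVec (z s) + w s • m s) ≤ x s ⬝ᵥ z s + y s * w s) ∧
        (∀ s', (1 - α) * ∑ σ, γ σ * (1 - α • Pmin)⁻¹ σ s' ≤ w s') ∧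
        (∀ s' : S,
            (∑ s, w s * ((if s = s' then (1 : ℝ) else 0) - α * ∑ a, f s a * pbar s a s'))
              - α * ∑ s, ∑ a, f s a * z s (a, s') = (1 - α) * γ s') ∧
        r = ∑ s, w s * cf s} := by
  have hPsub (u : (s : S) → A s → S → ℝ) (hu : ∀ s i, (B s *ᵥ Function.uncurry (u s)) i ≤ b s i) :
      Substochastic (transitionMatrix f fun s a s' => pbar s a s' + u s a s') :=
    transitionMatrix_substochastic hf0 hf1 (fun s => (hB s _ (hu s)).2) fun s a => by
      rw [Finset.sum_add_distrib, hpbar1]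
      exact (add_le_iff_nonpos_right _).2 ((hB s _ (hu s)).1 a).le
  have hpos (w : S → ℝ) (hw : ∀ s', discountedOccupancy α γ Pmin s' ≤ w s') (s : S) : 0 < w s :=
    (mul_pos (sub_pos.2 hα1) (hB1 s)).trans_le (hw s)
  ext r
  constructor
  · rintro ⟨u, hBu, hNu, rfl⟩
    set w := discountedOccupancy α γ (transitionMatrix f fun s a s' => pbar s a s' + u s a s')
    have hwlb : ∀ s', discountedOccupancy α γ Pmin s' ≤ w s' :=
      discountedOccupancy_mono hγ0 hα0.le hα1 (hPsub u hBu) hPmin.1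
        (le_transitionMatrix hf0 hf1 (hPminLe u fun s => ⟨hBu s, hNu s⟩))
    have hw := hpos w hwlb
    refine ⟨w, fun s => w s • Function.uncurry (u s),
      fun s => (mulVec_smul_le_mul_iff _ _ _ (hw s)).2 (hBu s),
      fun s => (euclNorm_mulVec_smul_add_le_iff _ _ _ _ _ (hw s)).2 (hNu s), hwlb,
      fun s' => ?_, (sum_discountedOccupancy_mul cf).symm⟩
    rw [balance_eq_vecMul f pbar u α (fun s => rfl),
      (vecMul_one_sub_smul_eq_iff ((hPsub u hBu).isUnit_det_one_sub_smul hα0.le hα1) w).2 rfl]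
    rfl
  · rintro ⟨w, z, hBz, hNz, hwlb, hbal, rfl⟩
    have hw := hpos w hwlb
    set u : (s : S) → A s → S → ℝ := fun s a s' => (w s)⁻¹ * z s (a, s')
    have hz (s : S) : z s = w s • Function.uncurry (u s) :=
      funext fun p => (mul_inv_cancel_left₀ (hw s).ne' (z s p)).symm
    have hBu (s : S) : ∀ i, (B s *ᵥ Function.uncurry (u s)) i ≤ b s i :=
      (mulVec_smul_le_mul_iff _ _ _ (hw s)).1 (hz s ▸ hBz s)
    have hNu (s : S) := (euclNorm_mulVec_smul_add_le_iff (M s)ᵀ (m s) (x s)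
      (Function.uncurry (u s)) (y s) (hw s)).1 (hz s ▸ hNz s)
    have hwocc :
        w = discountedOccupancy α γ (transitionMatrix f fun s a s' => pbar s a s' + u s a s') :=
      (vecMul_one_sub_smul_eq_iff ((hPsub u hBu).isUnit_det_one_sub_smul hα0.le hα1) w).1 <|
        funext fun s' => by rw [← balance_eq_vecMul f pbar u α hz, hbal]; rfl
    exact ⟨u, hBu, hNu, by rw [hwocc, sum_discountedOccupancy_mul]; rfl⟩

theorem stmt_12 {S : Type*} [Fintype S] [Nonempty S] [DecidableEq S]
    {A : S → Type*} [∀ s, Fintype (A s)] [∀ s, Nonempty (A s)]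
    -- stationary policy
    (f : (s : S) → A s → ℝ) (hf0 : ∀ s a, 0 ≤ f s a) (hf1 : ∀ s, ∑ a, f s a = 1)
    -- observed transition probabilities
    (pbar : (s : S) → A s → S → ℝ)
    (hpbar0 : ∀ s a s', 0 ≤ pbar s a s') (hpbar1 : ∀ s a, ∑ s', pbar s a s' = 1)
    (α : ℝ) (hα0 : 0 < α) (hα1 : α < 1)
    -- initial distribution
    (γ : S → ℝ) (hγ0 : ∀ s, 0 ≤ γ s) (hγ1 : ∑ s, γ s = 1)
    -- cost vector
    (cf : S → ℝ)
    -- uncertainty-set data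
    (ℓp ℓsc : S → ℕ)
    (B : (s : S) → Matrix (Fin (ℓp s)) (A s × S) ℝ) (b : (s : S) → Fin (ℓp s) → ℝ)
    (M : (s : S) → Matrix (A s × S) (Fin (ℓsc s)) ℝ) (m : (s : S) → Fin (ℓsc s) → ℝ)
    (x : (s : S) → A s × S → ℝ) (y : S → ℝ)
    -- the matrix P_min
    (Pmin : Matrix S S ℝ) (hPmin : Substochastic Pmin)
    -- P_min lower-bounds the perturbed transition probabilities of admissible deviations
    (hPminLe : ∀ u : (s : S) → A s → S → ℝ,
        (∀ s, (∀ i, (B s).mulVec (fun p : A s × S => u s p.1 p.2) i ≤ b s i) ∧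
          euclNorm ((M s)ᵀ.mulVec (fun p : A s × S => u s p.1 p.2) + m s)
            ≤ x s ⬝ᵥ (fun p : A s × S => u s p.1 p.2) + y s) →
        ∀ s a s', Pmin s s' ≤ pbar s a s' + u s a s')
    -- Assumption B.1
    (hB1 : ∀ s', 0 < ∑ s, γ s * (1 - α • Pmin)⁻¹ s s')
    -- the polyhedral constraints enforce the probability-simplex conditions
    (hB : ∀ s, ∀ v : A s × S → ℝ, (∀ i, (B s).mulVec v i ≤ b s i) →
        (∀ a, ∑ s', v (a, s') = 0) ∧ ∀ a s', 0 ≤ pbar s a s' + v (a, s')) :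
    {r : ℝ | ∃ u : (s : S) → A s → S → ℝ,
        (∀ s, ∀ i, (B s).mulVec (fun p : A s × S => u s p.1 p.2) i ≤ b s i) ∧
        (∀ s, euclNorm ((M s)ᵀ.mulVec (fun p : A s × S => u s p.1 p.2) + m s)
            ≤ x s ⬝ᵥ (fun p : A s × S => u s p.1 p.2) + y s) ∧
        r = (1 - α) * (γ ⬝ᵥ (((1 : Matrix S S ℝ)
              - α • Matrix.of fun s s' => ∑ a, f s a * (pbar s a s' + u s a s'))⁻¹).mulVec cf)}
      =
    {r : ℝ | ∃ (w : S → ℝ) (z : (s : S) → A s × S → ℝ),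
        (∀ s, ∀ i, (B s).mulVec (z s) i ≤ w s * b s i) ∧
        (∀ s, euclNorm ((M s)ᵀ.mulVec (z s) + w s • m s) ≤ x s ⬝ᵥ z s + y s * w s) ∧
        (∀ s', (1 - α) * ∑ σ, γ σ * (1 - α • Pmin)⁻¹ σ s' ≤ w s') ∧
        (∀ s' : S,
            (∑ s, w s * ((if s = s' then (1 : ℝ) else 0) - α * ∑ a, f s a * pbar s a s'))
              - α * ∑ s, ∑ a, f s a * z s (a, s') = (1 - α) * γ s') ∧
        r = ∑ s, w s * cf s} :=
  stmt_12_general f hf0 hf1 pbar hpbar1 α hα0 hα1 γ hγ0 cf ℓp ℓsc B b M m x y Pmin hPmin hPminLe hB1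
    hB
end

section
/- With the CMDP data, uncertainty-set data, feasible set Q, and dual data below, assume γ s ≥ 0 for every s. Then for every (w, z) ∈ Q and every dual-feasible tuple (β, μ, θ, η, ς), one has ∑_s w s * c_f s ≤ (1-α) * ∑_s γ s * (ς s - η s). -/
/-!
Lagrangian weak duality. In each state `s` the second dual constraint turns the pairing of `z s`
with `α f s a ς s'` into `β ⬝ᵥ B z - μ ⬝ᵥ Mᵀ z - θ x ⬝ᵥ z`, which the primal constraints bound by
`w s (b ⬝ᵥ β + m ⬝ᵥ μ + θ y)`: the polyhedral part because `β ≥ 0`, the conic part by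
Cauchy–Schwarz (the second-order cone is self-dual). Pairing the flow-balance equations of `Q`
with `ς` expresses `∑ w (ς - α P̄_f ς)` through `γ` and these pairings, and the first dual
constraint then leaves `∑ w c_f ≤ (1-α) γ ⬝ᵥ ς - ∑ w η ≤ (1-α) γ ⬝ᵥ (ς - η)`.
-/

open Matrix BigOperators

section Cone

variable {n : Type*} [Fintype n]

lemma euclNorm_eq_norm_toLp (v : n → ℝ) :
    euclNorm v = ‖(WithLp.toLp 2 v : EuclideanSpace ℝ n)‖ := by
  simp [euclNorm, EuclideanSpace.norm_eq]

lemma euclNorm_nonneg (v : n → ℝ) : 0 ≤ euclNorm v :=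
  Real.sqrt_nonneg _

lemma abs_dotProduct_le_euclNorm_mul (u v : n → ℝ) :
    |u ⬝ᵥ v| ≤ euclNorm u * euclNorm v := by
  simpa [euclNorm_eq_norm_toLp, EuclideanSpace.inner_toLp_toLp, dotProduct_comm] using
    abs_real_inner_le_norm (WithLp.toLp 2 u : EuclideanSpace ℝ n) (WithLp.toLp 2 v)

lemma neg_dotProduct_le_mul_of_euclNorm_le {μ u : n → ℝ} {θ t : ℝ}
    (hμ : euclNorm μ ≤ θ) (hu : euclNorm u ≤ t) : -(μ ⬝ᵥ u) ≤ θ * t :=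
  calc -(μ ⬝ᵥ u) ≤ |μ ⬝ᵥ u| := neg_le_abs _
    _ ≤ euclNorm μ * euclNorm u := abs_dotProduct_le_euclNorm_mul μ u
    _ ≤ θ * t := mul_le_mul hμ hu (euclNorm_nonneg u) ((euclNorm_nonneg μ).trans hμ)

end Cone

lemma dotProduct_le_of_conic_feasible {ι κ P : Type*} [Fintype ι] [Fintype κ] [Fintype P]
    {B : Matrix ι P ℝ} {b : ι → ℝ} {M : Matrix P κ ℝ} {m : κ → ℝ} {x z : P → ℝ}
    {y w θ : ℝ} {β : ι → ℝ} {μ : κ → ℝ}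
    (hz : B *ᵥ z ≤ w • b) (hzc : euclNorm (Mᵀ *ᵥ z + w • m) ≤ x ⬝ᵥ z + y * w)
    (hβ : 0 ≤ β) (hμ : euclNorm μ ≤ θ) :
    (Bᵀ *ᵥ β - M *ᵥ μ - θ • x) ⬝ᵥ z ≤ w * (b ⬝ᵥ β + m ⬝ᵥ μ + θ * y) := by
  have hlin : β ⬝ᵥ (B *ᵥ z) ≤ w * (b ⬝ᵥ β) := by
    simpa [dotProduct_smul, dotProduct_comm] using dotProduct_le_dotProduct_of_nonneg_left hz hβ
  have hcone := neg_dotProduct_le_mul_of_euclNorm_le hμ hzc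
  have hB : (Bᵀ *ᵥ β) ⬝ᵥ z = β ⬝ᵥ (B *ᵥ z) := by
    rw [mulVec_transpose, dotProduct_mulVec]
  have hM : (M *ᵥ μ) ⬝ᵥ z = μ ⬝ᵥ (Mᵀ *ᵥ z) := by
    rw [mulVec_transpose, dotProduct_comm μ, ← dotProduct_mulVec, dotProduct_comm]
  rw [dotProduct_add, dotProduct_smul, smul_eq_mul, dotProduct_comm μ m] at hcone
  rw [sub_dotProduct, sub_dotProduct, hB, hM, smul_dotProduct, smul_eq_mul]
  linarith

lemma sum_mul_sub_discounted_eq_of_balance {S : Type*} [Fintype S] [DecidableEq S] {A : S → Type*}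
    [∀ s, Fintype (A s)] {f : (s : S) → A s → ℝ} {P : Matrix S S ℝ} {α : ℝ} {γ w ς : S → ℝ}
    {z : (s : S) → A s × S → ℝ}
    (hw : ∀ s', (∑ s, w s * ((if s = s' then (1 : ℝ) else 0) - α * P s s'))
          - α * ∑ s, ∑ a, f s a * z s (a, s') = (1 - α) * γ s') :
    ∑ s, w s * (ς s - α * ∑ s', P s s' * ς s')
      = (1 - α) * ∑ s, γ s * ς s + α * ∑ s, (fun p : A s × S => f s p.1 * ς p.2) ⬝ᵥ z s := by
  have hflow : ∑ s, w s * (ς s - α * ∑ s', P s s' * ς s')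
      = ∑ s', (∑ s, w s * ((if s = s' then (1 : ℝ) else 0) - α * P s s')) * ς s' := by
    simp only [mul_sub, sub_mul, Finset.sum_sub_distrib, mul_ite, mul_one, mul_zero,
      Finset.sum_ite_eq', Finset.mem_univ, if_true, Finset.mul_sum, Finset.sum_mul]
    rw [Finset.sum_comm]
    exact congrArg _ (Finset.sum_congr rfl fun _ _ => Finset.sum_congr rfl fun _ _ => by ring)
  have hpolicy : ∑ s', (∑ s, ∑ a, f s a * z s (a, s')) * ς s'
      = ∑ s, (fun p : A s × S => f s p.1 * ς p.2) ⬝ᵥ z s := by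
    simp only [dotProduct, Fintype.sum_prod_type, Finset.sum_mul]
    rw [Finset.sum_comm]
    refine Finset.sum_congr rfl fun s _ => ?_
    rw [Finset.sum_comm]
    exact Finset.sum_congr rfl fun a _ => Finset.sum_congr rfl fun s' _ => by ring
  rw [hflow, ← hpolicy, Finset.mul_sum, Finset.mul_sum, ← Finset.sum_add_distrib]
  exact Finset.sum_congr rfl fun s' _ => by linear_combination ς s' * hw s'

theorem stmt_13_general {S : Type*} [Fintype S] [DecidableEq S]
    {A : S → Type*} [∀ s, Fintype (A s)]
    -- stationary policy
    (f : (s : S) → A s → ℝ)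
    (α : ℝ)
    (γ : S → ℝ)
    -- cost vector
    (cf : S → ℝ)
    -- uncertainty-set data
    (ℓp ℓsc : S → ℕ)
    (B : (s : S) → Matrix (Fin (ℓp s)) (A s × S) ℝ) (b : (s : S) → Fin (ℓp s) → ℝ)
    (M : (s : S) → Matrix (A s × S) (Fin (ℓsc s)) ℝ) (m : (s : S) → Fin (ℓsc s) → ℝ)
    (x : (s : S) → A s × S → ℝ) (y : S → ℝ)
    -- observed transition matrix under f
    (Pbarf : Matrix S S ℝ)
    -- a pair (w, z) in the inner-problem feasible set Q
    (w : S → ℝ) (z : (s : S) → A s × S → ℝ)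
    (hQ1 : ∀ s, ∀ i, (B s).mulVec (z s) i ≤ w s * b s i)
    (hQ2 : ∀ s, euclNorm ((M s)ᵀ.mulVec (z s) + w s • m s) ≤ x s ⬝ᵥ z s + y s * w s)
    (hQ3 : ∀ s, (1 - α) * γ s ≤ w s)
    (hQ4 : ∀ s' : S,
        (∑ s, w s * ((if s = s' then (1 : ℝ) else 0) - α * Pbarf s s'))
          - α * ∑ s, ∑ a, f s a * z s (a, s') = (1 - α) * γ s')
    -- a dual-feasible tuple (β, μ, θ, η, ς)
    (β : (s : S) → Fin (ℓp s) → ℝ) (μ : (s : S) → Fin (ℓsc s) → ℝ)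
    (θ : S → ℝ) (η ς : S → ℝ)
    (hd1 : ∀ s, cf s + b s ⬝ᵥ β s + m s ⬝ᵥ μ s + θ s * y s + η s
        - (ς s - α * ∑ s', Pbarf s s' * ς s') = 0)
    (hd2 : ∀ s, ∀ p : A s × S, ((B s)ᵀ.mulVec (β s)) p - ((M s).mulVec (μ s)) p
        - θ s * x s p - α * f s p.1 * ς p.2 = 0)
    (hd3 : ∀ s, euclNorm (μ s) ≤ θ s)
    (hd4 : ∀ s, ∀ i, 0 ≤ β s i)
    (hd5 : ∀ s, 0 ≤ η s) :
    ∑ s, w s * cf s ≤ (1 - α) * ∑ s, γ s * (ς s - η s) := by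
  have hblock : ∀ s, α * ((fun p : A s × S => f s p.1 * ς p.2) ⬝ᵥ z s)
      ≤ w s * (b s ⬝ᵥ β s + m s ⬝ᵥ μ s + θ s * y s) := by
    intro s
    have hg : (B s)ᵀ *ᵥ β s - M s *ᵥ μ s - θ s • x s = α • fun p => f s p.1 * ς p.2 := by
      funext p
      simp only [Pi.sub_apply, Pi.smul_apply, smul_eq_mul]
      linear_combination hd2 s p
    simpa [hg, smul_dotProduct] using
      dotProduct_le_of_conic_feasible (hQ1 s) (hQ2 s) (hd4 s) (hd3 s)
  have hcost : ∑ s, w s * cf s = ∑ s, w s * (ς s - α * ∑ s', Pbarf s s' * ς s')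
      - ∑ s, w s * (b s ⬝ᵥ β s + m s ⬝ᵥ μ s + θ s * y s) - ∑ s, w s * η s := by
    rw [← Finset.sum_sub_distrib, ← Finset.sum_sub_distrib]
    exact Finset.sum_congr rfl fun s _ => by linear_combination w s * hd1 s
  have hη : (1 - α) * ∑ s, γ s * η s ≤ ∑ s, w s * η s := by
    rw [Finset.mul_sum]
    exact Finset.sum_le_sum fun s _ => by
      simpa [mul_assoc] using mul_le_mul_of_nonneg_right (hQ3 s) (hd5 s)
  have hdual := Finset.sum_le_sum fun s (_ : s ∈ Finset.univ) => hblock s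
  rw [← Finset.mul_sum] at hdual
  rw [hcost, sum_mul_sub_discounted_eq_of_balance hQ4]
  simp only [mul_sub, Finset.sum_sub_distrib]
  linarith

theorem stmt_13 {S : Type*} [Fintype S] [Nonempty S] [DecidableEq S]
    {A : S → Type*} [∀ s, Fintype (A s)] [∀ s, Nonempty (A s)]
    -- stationary policy
    (f : (s : S) → A s → ℝ) (hf0 : ∀ s a, 0 ≤ f s a) (hf1 : ∀ s, ∑ a, f s a = 1)
    -- observed transition probabilities
    (pbar : (s : S) → A s → S → ℝ)
    (hpbar0 : ∀ s a s', 0 ≤ pbar s a s') (hpbar1 : ∀ s a, ∑ s', pbar s a s' = 1)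
    (α : ℝ) (hα0 : 0 < α) (hα1 : α < 1)
    (γ : S → ℝ) (hγ0 : ∀ s, 0 ≤ γ s)
    -- cost vector
    (cf : S → ℝ)
    -- uncertainty-set data
    (ℓp ℓsc : S → ℕ)
    (B : (s : S) → Matrix (Fin (ℓp s)) (A s × S) ℝ) (b : (s : S) → Fin (ℓp s) → ℝ)
    (M : (s : S) → Matrix (A s × S) (Fin (ℓsc s)) ℝ) (m : (s : S) → Fin (ℓsc s) → ℝ)
    (x : (s : S) → A s × S → ℝ) (y : S → ℝ)
    -- observed transition matrix under f
    (Pbarf : Matrix S S ℝ)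
    (hPbarf : ∀ s s', Pbarf s s' = ∑ a, f s a * pbar s a s')
    -- a pair (w, z) in the inner-problem feasible set Q
    (w : S → ℝ) (z : (s : S) → A s × S → ℝ)
    (hQ1 : ∀ s, ∀ i, (B s).mulVec (z s) i ≤ w s * b s i)
    (hQ2 : ∀ s, euclNorm ((M s)ᵀ.mulVec (z s) + w s • m s) ≤ x s ⬝ᵥ z s + y s * w s)
    (hQ3 : ∀ s, (1 - α) * γ s ≤ w s)
    (hQ4 : ∀ s' : S,
        (∑ s, w s * ((if s = s' then (1 : ℝ) else 0) - α * Pbarf s s'))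
          - α * ∑ s, ∑ a, f s a * z s (a, s') = (1 - α) * γ s')
    -- a dual-feasible tuple (β, μ, θ, η, ς)
    (β : (s : S) → Fin (ℓp s) → ℝ) (μ : (s : S) → Fin (ℓsc s) → ℝ)
    (θ : S → ℝ) (η ς : S → ℝ)
    (hd1 : ∀ s, cf s + b s ⬝ᵥ β s + m s ⬝ᵥ μ s + θ s * y s + η s
        - (ς s - α * ∑ s', Pbarf s s' * ς s') = 0)
    (hd2 : ∀ s, ∀ p : A s × S, ((B s)ᵀ.mulVec (β s)) p - ((M s).mulVec (μ s)) p
        - θ s * x s p - α * f s p.1 * ς p.2 = 0)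
    (hd3 : ∀ s, euclNorm (μ s) ≤ θ s)
    (hd4 : ∀ s, ∀ i, 0 ≤ β s i)
    (hd5 : ∀ s, 0 ≤ η s) :
    ∑ s, w s * cf s ≤ (1 - α) * ∑ s, γ s * (ς s - η s) :=
  stmt_13_general f α γ cf ℓp ℓsc B b M m x y Pbarf w z hQ1 hQ2 hQ3 hQ4 β μ θ η ς hd1 hd2 hd3 hd4
    hd5
end
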